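/- The map γ⁻² P² = (n / Tr P²) P² : TM → TΣ is the orthogonal projection of TM onto the tangent space TΣ; in particular (1/n) Tr P² = γ² where Tr denotes the trace over the ambient indices. -/

import Mathlib

open scoped BigOperators
noncomputable section

open Classical in
/-- The totally antisymmetric Levi-Civita symbol with `ε^{01⋯(n-1)} = 1`. -/
def eps {n : ℕ} (v : Fin n → Fin n) : ℝ :=
  if h : Function.Bijective v then ((Equiv.Perm.sign (Equiv.ofBijective v h) : ℤ) : ℝ) else 0

/-- Partial derivative `∂_a f` of a function on the chart `ℝ^ν` of `Σ`. -/
def pd {ν : ℕ} (a : Fin ν) (f : (Fin ν → ℝ) → ℝ) (p : Fin ν → ℝ) : ℝ :=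
  fderiv ℝ f p (Pi.single a 1)

/-- The Nambu bracket `{f₁,…,f_ν} = ρ⁻¹ ε^{a₁⋯a_ν} (∂_{a₁}f₁)⋯(∂_{a_ν}f_ν)`. -/
def nb {ν : ℕ} (ρ : (Fin ν → ℝ) → ℝ) (f : Fin ν → (Fin ν → ℝ) → ℝ) (p : Fin ν → ℝ) : ℝ :=
  (ρ p)⁻¹ * ∑ σ : Fin ν → Fin ν, eps σ * ∏ a : Fin ν, pd (σ a) (f a) p

/-! With `E = (∂_a x^i)` the Jacobian of the embedding, the Nambu bracket
`{x^i, x^{j_1}, …, x^{j_d}}` is `ρ⁻¹` times the minor of `E` on the rows `i, j_1, …, j_d`.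
Contracting two such minors against `ḡ` in their last `d` rows is a Cauchy–Binet type computation:
the sums over the `j`'s produce the induced metric `g = Eᵀ ḡ E` in the last `d` slots, and what
remains is `d!` times a cofactor expansion of `g`. Hence `P² = ρ⁻² E adj(g) Eᵀ = γ² E g⁻¹ Eᵀ`,
and `E g⁻¹ Eᵀ ḡ` is the `ḡ`-orthogonal projection onto the column span `TΣ` of `E`, whose trace
is `n`. -/

open Matrix Finset Equiv

lemma eps_perm {n : ℕ} (σ : Perm (Fin n)) : eps ⇑σ = (Perm.sign σ : ℝ) := by
  rw [eps, dif_pos σ.bijective, show ofBijective _ σ.bijective = σ from Equiv.ext fun _ => rfl]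

lemma sum_eps_mul {n : ℕ} (F : (Fin n → Fin n) → ℝ) :
    ∑ v, eps v * F v = ∑ σ : Perm (Fin n), (Perm.sign σ : ℝ) * F σ := by
  classical
  rw [← sum_subset (subset_univ (univ.image fun σ : Perm (Fin n) => ⇑σ)),
    sum_image fun _ _ _ _ h => DFunLike.coe_injective h]
  · exact sum_congr rfl fun σ _ => by rw [eps_perm]
  · intro v _ hv
    have : ¬ Function.Bijective v := fun hb => hv (mem_image.2 ⟨.ofBijective v hb, mem_univ _, rfl⟩)
    rw [eps, dif_neg this, zero_mul]

lemma nb_eq_det {ν : ℕ} (ρ : (Fin ν → ℝ) → ℝ) (f : Fin ν → (Fin ν → ℝ) → ℝ) (p : Fin ν → ℝ) :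
    nb ρ f p = (ρ p)⁻¹ * (Matrix.of fun a b => pd b (f a) p).det := by
  rw [nb, sum_eps_mul, ← det_transpose, det_apply']
  rfl

lemma Finset.sum_sum_sum_sum_comm {α β γ δ M : Type*} [Fintype α] [Fintype β] [Fintype γ]
    [Fintype δ] [AddCommMonoid M] (f : α → β → γ → δ → M) :
    ∑ a, ∑ b, ∑ c, ∑ e, f a b c e = ∑ c, ∑ e, ∑ a, ∑ b, f a b c e := by
  simp only [← Fintype.sum_prod_type' (α₁ := α), ← Fintype.sum_prod_type' (α₁ := γ)]
  exact sum_comm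

lemma sum_sum_prod_eq_prod_sum_sum {ι R : Type*} [Fintype ι] [CommSemiring R] {d : ℕ}
    (f : Fin d → ι → ι → R) :
    ∑ J : Fin d → ι, ∑ J' : Fin d → ι, ∏ l, f l (J l) (J' l) = ∏ l, ∑ j, ∑ j', f l j j' := by
  simp only [Fintype.prod_sum]

lemma Equiv.Perm.sum_apply_zero {M : Type*} [AddCommMonoid M] {d : ℕ} (f : Fin (d + 1) → M) :
    ∑ σ : Perm (Fin (d + 1)), f (σ 0) = d.factorial • ∑ a, f a := by
  rw [← Perm.decomposeFin.symm.sum_comp, Fintype.sum_prod_type]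
  simp only [Perm.decomposeFin_symm_apply_zero, sum_const, card_univ, Fintype.card_perm,
    Fintype.card_fin, smul_sum]

section CommRing

variable {R : Type*} [CommRing R]

lemma Matrix.det_updateRow_eq_vecMul_adjugate {n : Type*} [Fintype n] [DecidableEq n]
    (g : Matrix n n R) (a : n) (v : n → R) :
    (g.updateRow a v).det = (v ᵥ* g.adjugate) a := by
  rw [← cramer_transpose_apply, cramer_eq_adjugate_mulVec, ← adjugate_transpose, mulVec_transpose]

lemma Matrix.det_eq_sum_sign_mul_zero_mul_prod_succ {d : ℕ}
    (M : Matrix (Fin (d + 1)) (Fin (d + 1)) R) :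
    M.det = ∑ σ : Perm (Fin (d + 1)),
      (Perm.sign σ : R) * (M 0 (σ 0) * ∏ l : Fin d, M l.succ (σ l.succ)) := by
  rw [← det_transpose, det_apply']
  simp only [transpose_apply, Fin.prod_univ_succ]

/-- The left side is the Leibniz expansion of the determinant of `g` with row `σ 0` replaced by `v`
and rows permuted by `σ`. -/
lemma sum_sign_mul_prod_succ {d : ℕ} (g : Matrix (Fin (d + 1)) (Fin (d + 1)) R)
    (v : Fin (d + 1) → R) (σ : Perm (Fin (d + 1))) :
    ∑ τ : Perm (Fin (d + 1)), (Perm.sign τ : R) * (v (τ 0) * ∏ l : Fin d, g (σ l.succ) (τ l.succ))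
      = Perm.sign σ * (g.updateRow (σ 0) v).det := by
  rw [← det_permute, det_eq_sum_sign_mul_zero_mul_prod_succ]
  refine sum_congr rfl fun τ _ => ?_
  simp only [submatrix_apply, updateRow_self, updateRow_ne (σ.injective.ne (Fin.succ_ne_zero _))]
  rfl

lemma sum_sign_mul_sign_mul_prod_succ {d : ℕ} (g : Matrix (Fin (d + 1)) (Fin (d + 1)) R)
    (u v : Fin (d + 1) → R) :
    ∑ σ : Perm (Fin (d + 1)), ∑ τ : Perm (Fin (d + 1)), (Perm.sign σ : R) * Perm.sign τ *
        (u (σ 0) * v (τ 0) * ∏ l : Fin d, g (σ l.succ) (τ l.succ))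
      = d.factorial * (u ⬝ᵥ (v ᵥ* g.adjugate)) := by
  calc _ = ∑ σ : Perm (Fin (d + 1)), u (σ 0) * (g.updateRow (σ 0) v).det := by
        refine sum_congr rfl fun σ _ => ?_
        have hsign : (Perm.sign σ : R) * Perm.sign σ = 1 := by
          rw [← Int.cast_mul, ← Units.val_mul, Int.units_mul_self, Units.val_one, Int.cast_one]
        calc _ = Perm.sign σ * u (σ 0) * ∑ τ : Perm (Fin (d + 1)),
              (Perm.sign τ : R) * (v (τ 0) * ∏ l : Fin d, g (σ l.succ) (τ l.succ)) := by
              rw [mul_sum]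
              exact sum_congr rfl fun τ _ => by ring
          _ = _ := by
              rw [sum_sign_mul_prod_succ]
              linear_combination (u (σ 0) * (g.updateRow (σ 0) v).det) * hsign
    _ = d.factorial * (u ⬝ᵥ (v ᵥ* g.adjugate)) := by
        simp only [det_updateRow_eq_vecMul_adjugate]
        rw [Perm.sum_apply_zero fun a => u a * (v ᵥ* g.adjugate) a, nsmul_eq_mul, dotProduct]

lemma Matrix.transpose_mul_mul_apply {ι κ : Type*} [Fintype ι] (E : Matrix ι κ R)
    (G : Matrix ι ι R) (a c : κ) :
    (Eᵀ * G * E) a c = ∑ j, ∑ j', G j j' * E j a * E j' c := by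
  simp only [mul_apply, transpose_apply, sum_mul]
  rw [sum_comm]
  exact sum_congr rfl fun _ _ => sum_congr rfl fun _ _ => by ring

theorem sum_det_submatrix_cons_mul_det_submatrix_cons {ι : Type*} [Fintype ι] {d : ℕ}
    (E : Matrix ι (Fin (d + 1)) R) (G : Matrix ι ι R) (i k : ι) :
    ∑ J : Fin d → ι, ∑ J' : Fin d → ι, (E.submatrix (Fin.cons i J) id).det *
        (E.submatrix (Fin.cons k J') id).det * ∏ l, G (J l) (J' l)
      = d.factorial * (E * (Eᵀ * G * E).adjugate * Eᵀ) k i := by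
  have hJ : ∀ σ τ : Perm (Fin (d + 1)), ∑ J : Fin d → ι, ∑ J' : Fin d → ι,
      (∏ l, G (J l) (J' l)) * (∏ l, E (J l) (σ l.succ)) * ∏ l, E (J' l) (τ l.succ)
        = ∏ l : Fin d, (Eᵀ * G * E) (σ l.succ) (τ l.succ) := fun σ τ => by
    simp only [← prod_mul_distrib, transpose_mul_mul_apply]
    exact sum_sum_prod_eq_prod_sum_sum fun l j j' => G j j' * E j (σ l.succ) * E j' (τ l.succ)
  calc _ = ∑ σ : Perm (Fin (d + 1)), ∑ τ : Perm (Fin (d + 1)), (Perm.sign σ : R) * Perm.sign τ *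
        (E i (σ 0) * E k (τ 0) * ∏ l : Fin d, (Eᵀ * G * E) (σ l.succ) (τ l.succ)) := by
        simp only [det_eq_sum_sign_mul_zero_mul_prod_succ, submatrix_apply, Fin.cons_zero,
          Fin.cons_succ, id, sum_mul, mul_sum]
        rw [sum_sum_sum_sum_comm, sum_comm]
        refine sum_congr rfl fun σ _ => sum_congr rfl fun τ _ => ?_
        simp only [← hJ, mul_sum]
        exact sum_congr rfl fun _ _ => sum_congr rfl fun _ _ => by ring
    _ = _ := by
        rw [sum_sign_mul_sign_mul_prod_succ, dotProduct_comm]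
        rfl

lemma Matrix.IsSymm.mul_mul_transpose {ι κ : Type*} [Fintype ι] [Fintype κ] {A : Matrix κ κ R}
    (hA : A.IsSymm) (E : Matrix ι κ R) : (E * A * Eᵀ).IsSymm := by
  rw [IsSymm, transpose_mul, transpose_mul, hA.eq, transpose_transpose, Matrix.mul_assoc]

lemma Matrix.IsSymm.transpose_mul_mul {ι κ : Type*} [Fintype ι] [Fintype κ] {A : Matrix ι ι R}
    (hA : A.IsSymm) (E : Matrix ι κ R) : (Eᵀ * A * E).IsSymm := by
  simpa using hA.mul_mul_transpose Eᵀ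

lemma sum_sum_mul_mul_eq_mulVec {ι κ : Type*} [Fintype ι] [Fintype κ]
    (E : Matrix ι κ R) (A : Matrix κ κ R) (G : Matrix ι ι R) (X : ι → R) (i : ι) :
    ∑ a, ∑ c, (∑ j, ∑ k, G j k * X j * E k a) * A a c * E i c = ((E * Aᵀ * Eᵀ * Gᵀ) *ᵥ X) i := by
  simp only [mulVec, dotProduct, mul_apply, transpose_apply, sum_mul]
  rw [sum_sum_sum_sum_comm]
  exact sum_congr rfl fun _ _ => sum_congr rfl fun _ _ => sum_congr rfl fun _ _ =>
    sum_congr rfl fun _ _ => by ring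

lemma sum_sum_mul_mul_eq_mul_mulVec {ι : Type*} [Fintype ι] (A G : Matrix ι ι R) (X : ι → R)
    (i : ι) : ∑ j, ∑ k, A i j * G j k * X k = ((A * G) *ᵥ X) i := by
  rw [← mulVec_mulVec]
  simp only [mulVec, dotProduct, mul_sum, mul_assoc]

end CommRing

lemma Matrix.adjugate_eq_det_smul_inv {K ι : Type*} [Field K] [Fintype ι] [DecidableEq ι]
    (A : Matrix ι ι K) (h : A.det ≠ 0) : A.adjugate = A.det • A⁻¹ := by
  rw [inv_def, Ring.inverse_eq_inv', smul_smul, mul_inv_cancel₀ h, one_smul]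

lemma Matrix.trace_mul_inv_transpose_mul_mul {K ι κ : Type*} [Field K] [Fintype ι] [Fintype κ]
    [DecidableEq κ] (E : Matrix ι κ K) (G : Matrix ι ι K) (h : (Eᵀ * G * E).det ≠ 0) :
    (E * (Eᵀ * G * E)⁻¹ * Eᵀ * G).trace = Fintype.card κ := by
  rw [Matrix.mul_assoc, trace_mul_comm, ← Matrix.mul_assoc, mul_nonsing_inv _ h.isUnit, trace_one]

def jacobian {m ν : ℕ} (x : Fin m → (Fin ν → ℝ) → ℝ) (p : Fin ν → ℝ) : Matrix (Fin m) (Fin ν) ℝ :=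
  Matrix.of fun i a => pd a (x i) p

lemma transpose_jacobian_mul_mul_jacobian {m ν : ℕ} (x : Fin m → (Fin ν → ℝ) → ℝ)
    (p : Fin ν → ℝ) (G : Matrix (Fin m) (Fin m) ℝ) :
    (jacobian x p)ᵀ * G * jacobian x p
      = Matrix.of fun a c => ∑ i, ∑ j, G i j * pd a (x i) p * pd c (x j) p := by
  ext a c
  rw [transpose_mul_mul_apply]
  rfl

lemma nb_cons_eq_det_submatrix {m d : ℕ} (ρ : (Fin (d + 1) → ℝ) → ℝ)
    (x : Fin m → (Fin (d + 1) → ℝ) → ℝ) (p : Fin (d + 1) → ℝ) (i : Fin m) (J : Fin d → Fin m) :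
    nb ρ (Fin.cons (x i) fun l => x (J l)) p
      = (ρ p)⁻¹ * ((jacobian x p).submatrix (Fin.cons i J) id).det := by
  rw [nb_eq_det]
  congr 3
  ext a b
  cases a using Fin.cases <;> rfl

lemma sum_nb_mul_nb_mul_prod {m d : ℕ} (ρ : (Fin (d + 1) → ℝ) → ℝ)
    (x : Fin m → (Fin (d + 1) → ℝ) → ℝ) (p : Fin (d + 1) → ℝ) {G : Matrix (Fin m) (Fin m) ℝ}
    (hG : G.IsSymm) (hdet : ((jacobian x p)ᵀ * G * jacobian x p).det ≠ 0) (i k : Fin m) :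
    ∑ J : Fin d → Fin m, ∑ J' : Fin d → Fin m,
      (Real.sqrt (d.factorial : ℝ))⁻¹ * nb ρ (Fin.cons (x i) fun l => x (J l)) p *
        ((Real.sqrt (d.factorial : ℝ))⁻¹ * nb ρ (Fin.cons (x k) fun l => x (J' l)) p) *
        ∏ l, G (J l) (J' l)
      = ((jacobian x p)ᵀ * G * jacobian x p).det / ρ p ^ 2 *
          (jacobian x p * ((jacobian x p)ᵀ * G * jacobian x p)⁻¹ * (jacobian x p)ᵀ) i k := by
  set E := jacobian x p
  have hfact : (Real.sqrt d.factorial)⁻¹ * (Real.sqrt d.factorial)⁻¹ = (d.factorial : ℝ)⁻¹ := by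
    rw [← mul_inv, Real.mul_self_sqrt (Nat.cast_nonneg _)]
  simp only [nb_cons_eq_det_submatrix]
  calc _ = ((d.factorial : ℝ)⁻¹ * (ρ p ^ 2)⁻¹) * ∑ J : Fin d → Fin m, ∑ J' : Fin d → Fin m,
        (E.submatrix (Fin.cons i J) id).det * (E.submatrix (Fin.cons k J') id).det *
          ∏ l, G (J l) (J' l) := by
        simp only [mul_sum]
        refine sum_congr rfl fun J _ => sum_congr rfl fun J' _ => ?_
        rw [← hfact]
        ring
    _ = _ := by
        rw [sum_det_submatrix_cons_mul_det_submatrix_cons, adjugate_eq_det_smul_inv _ hdet,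
          Matrix.mul_smul, Matrix.smul_mul, Matrix.smul_apply, smul_eq_mul,
          ((hG.transpose_mul_mul E).inv.mul_mul_transpose E).apply]
        field_simp

/-- For `Σ^n ⊂ (M^m, ḡ)` (here `n = d+1`), the map `γ⁻²P² = (n/Tr P²)P² : TM → TΣ` is the
orthogonal projection of `TM` onto `TΣ` (which sends `X` to `ḡ(X,e_a)g^{ab}e_b`); in
particular `(1/n) Tr P² = γ²`, where `Tr` is the trace over the ambient indices. -/
theorem P_squared_projection (d m : ℕ)
    (ρ : (Fin (d + 1) → ℝ) → ℝ)
    (x : Fin m → (Fin (d + 1) → ℝ) → ℝ)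
    (gbar : (Fin (d + 1) → ℝ) → Matrix (Fin m) (Fin m) ℝ)
    (p : Fin (d + 1) → ℝ)
    (hgbar : (gbar p).PosDef)
    (hρ : ρ p ≠ 0)
    (gind : Matrix (Fin (d + 1)) (Fin (d + 1)) ℝ)
    (hgind : gind = Matrix.of fun a c =>
      ∑ i, ∑ j, gbar p i j * pd a (x i) p * pd c (x j) p)
    (hgpos : 0 < gind.det)
    (γ : ℝ) (hγ : γ = Real.sqrt gind.det / ρ p)
    (P : Fin m → (Fin d → Fin m) → ℝ)
    (hP : P = fun i J => (Real.sqrt (d.factorial : ℝ))⁻¹ *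
      nb ρ (Fin.cons (x i) fun l => x (J l)) p)
    (P2up : Fin m → Fin m → ℝ)
    (hP2up : P2up = fun i k => ∑ J : Fin d → Fin m, ∑ J' : Fin d → Fin m,
      P i J * P k J' * ∏ l : Fin d, gbar p (J l) (J' l))
    (P2X : (Fin m → ℝ) → Fin m → ℝ)
    (hP2X : P2X = fun X i => ∑ j, ∑ k, P2up i j * gbar p j k * X k)
    (TrP2 : ℝ) (hTrP2 : TrP2 = ∑ i, ∑ j, P2up i j * gbar p j i)
    -- the orthogonal projection of `TM` onto `TΣ`
    (proj : (Fin m → ℝ) → Fin m → ℝ)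
    (hproj : proj = fun X i => ∑ a, ∑ c,
      (∑ j, ∑ k, gbar p j k * X j * pd a (x k) p) * gind⁻¹ a c * pd c (x i) p) :
    (1 / ((d : ℝ) + 1)) * TrP2 = γ ^ 2 ∧
    (∀ (X : Fin m → ℝ) (i : Fin m), (γ ^ 2)⁻¹ * P2X X i = proj X i) ∧
    (∀ (X : Fin m → ℝ) (i : Fin m), (((d : ℝ) + 1) / TrP2) * P2X X i = proj X i) := by
  set E := jacobian x p
  have hGsymm : (gbar p).IsSymm := isHermitian_iff_isSymm.1 hgbar.isHermitian
  have hg : gind = Eᵀ * gbar p * E := hgind.trans (transpose_jacobian_mul_mul_jacobian x p _).symm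
  have hgsymm : gind.IsSymm := hg ▸ hGsymm.transpose_mul_mul E
  have hdet : gind.det ≠ 0 := hgpos.ne'
  have hγ2 : γ ^ 2 = gind.det / ρ p ^ 2 := by rw [hγ, div_pow, Real.sq_sqrt hgpos.le]
  have hP2 : P2up = γ ^ 2 • (E * gind⁻¹ * Eᵀ) := by
    ext i k
    simp only [hP2up, hP]
    rw [sum_nb_mul_nb_mul_prod ρ x p hGsymm (hg ▸ hdet), ← hg, hγ2]
    rfl
  have hTr : TrP2 = (d + 1) * γ ^ 2 := by
    have htrace := trace_mul_inv_transpose_mul_mul E (gbar p) (hg ▸ hdet)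
    rw [← hg, Fintype.card_fin, Nat.cast_succ] at htrace
    calc TrP2 = (γ ^ 2 • (E * gind⁻¹ * Eᵀ) * gbar p).trace := by rw [hTrP2, hP2]; rfl
      _ = (d + 1) * γ ^ 2 := by rw [Matrix.smul_mul, trace_smul, htrace, smul_eq_mul, mul_comm]
  have hP2X_eq_proj : ∀ X i, (γ ^ 2)⁻¹ * P2X X i = proj X i := fun X i => by
    have hγ0 : γ ^ 2 ≠ 0 := hγ2 ▸ div_ne_zero hdet (pow_ne_zero 2 hρ)
    simp only [hP2X, hproj, hP2]
    rw [sum_sum_mul_mul_eq_mul_mulVec, Matrix.smul_mul, smul_mulVec,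
      Pi.smul_apply, smul_eq_mul, inv_mul_cancel_left₀ hγ0]
    exact ((sum_sum_mul_mul_eq_mulVec E gind⁻¹ (gbar p) X i).trans (by
      rw [hGsymm.eq, hgsymm.inv.eq])).symm
  have hd : ((d : ℝ) + 1) ≠ 0 := d.cast_add_one_ne_zero
  refine ⟨?_, hP2X_eq_proj, fun X i => ?_⟩
  · rw [hTr, one_div, inv_mul_cancel_left₀ hd]
  · rw [hTr, div_mul_cancel_left₀ hd]
    exact hP2X_eq_proj X i
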